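/- arXiv:2007.04043 — 2 statements merged into one kernel-verified Lean document; each statement's English description precedes it below -/
import Mathlib

section
/- Let μ be a probability measure on a space Z, and let ℓ, r, g : Z → ℝ be measurable functions with 0 ≤ ℓ ≤ m for a constant m, and r, g square-integrable with respect to μ. Then (∫ ℓ·r dμ)² / 2 ≤ (∫ ℓ·g dμ)² + m² · ∫ (g − r)² dμ. -/
/-! Split `ℓ r = ℓ g - ℓ (g - r)` and use `(a - b)² ≤ 2a² + 2b²`. The cross term is controlled
by Cauchy–Schwarz in `L²(μ)`: `(∫ ℓ (g - r))² ≤ ∫ ℓ² · ∫ (g - r)²`, and `∫ ℓ² ≤ m²` because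
`0 ≤ ℓ ≤ m` and `μ` is a probability measure. -/

open MeasureTheory

namespace MeasureTheory.MemLp

variable {Z : Type*} [MeasurableSpace Z] {μ : Measure Z} {f h : Z → ℝ}

lemma inner_toLp_toLp (hf : MemLp f 2 μ) (hh : MemLp h 2 μ) :
    inner ℝ (hf.toLp f) (hh.toLp h) = ∫ z, f z * h z ∂μ := by
  rw [L2.inner_def]
  refine integral_congr_ae ?_
  filter_upwards [hf.coeFn_toLp, hh.coeFn_toLp] with z hfz hhz
  simp [hfz, hhz, mul_comm]

lemma sq_integral_mul_le (hf : MemLp f 2 μ) (hh : MemLp h 2 μ) :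
    (∫ z, f z * h z ∂μ) ^ 2 ≤ (∫ z, f z ^ 2 ∂μ) * ∫ z, h z ^ 2 ∂μ := by
  simpa only [inner_toLp_toLp, ← sq] using real_inner_mul_inner_self_le (hf.toLp f) (hh.toLp h)

lemma sq_integral_mul_le_of_abs_le [IsProbabilityMeasure μ] {m : ℝ} (hf : MemLp f 2 μ)
    (hfm : ∀ᵐ z ∂μ, |f z| ≤ m) (hh : MemLp h 2 μ) :
    (∫ z, f z * h z ∂μ) ^ 2 ≤ m ^ 2 * ∫ z, h z ^ 2 ∂μ := by
  have hf_sq : ∫ z, f z ^ 2 ∂μ ≤ m ^ 2 := by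
    calc ∫ z, f z ^ 2 ∂μ ≤ ∫ _, m ^ 2 ∂μ := by
          refine integral_mono_ae hf.integrable_sq (integrable_const _) ?_
          filter_upwards [hfm] with z hz
          exact sq_le_sq' (neg_le_of_abs_le hz) (le_of_abs_le hz)
      _ = m ^ 2 := by simp
  calc (∫ z, f z * h z ∂μ) ^ 2 ≤ (∫ z, f z ^ 2 ∂μ) * ∫ z, h z ^ 2 ∂μ := sq_integral_mul_le hf hh
    _ ≤ m ^ 2 * ∫ z, h z ^ 2 ∂μ :=
      mul_le_mul_of_nonneg_right hf_sq (integral_nonneg fun z => sq_nonneg _)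

end MeasureTheory.MemLp

theorem stmt0_general {Z : Type*} [MeasurableSpace Z] (μ : Measure Z) [IsProbabilityMeasure μ]
    (ℓ r g : Z → ℝ) (m : ℝ)
    (hℓmeas : Measurable ℓ)
    (hℓ0 : ∀ z, 0 ≤ ℓ z) (hℓm : ∀ z, ℓ z ≤ m)
    (hr2 : MemLp r 2 μ) (hg2 : MemLp g 2 μ) :
    (∫ z, ℓ z * r z ∂μ) ^ 2 / 2 ≤
      (∫ z, ℓ z * g z ∂μ) ^ 2 + m ^ 2 * ∫ z, (g z - r z) ^ 2 ∂μ := by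
  have hℓ_abs : ∀ᵐ z ∂μ, |ℓ z| ≤ m :=
    ae_of_all _ fun z => (abs_of_nonneg (hℓ0 z)).trans_le (hℓm z)
  have hℓ2 : MemLp ℓ 2 μ := MemLp.of_bound hℓmeas.aestronglyMeasurable m hℓ_abs
  have hgr2 : MemLp (fun z => g z - r z) 2 μ := hg2.sub hr2
  have hsplit : ∫ z, ℓ z * r z ∂μ = (∫ z, ℓ z * g z ∂μ) - ∫ z, ℓ z * (g z - r z) ∂μ := by
    rw [← integral_sub (f := fun z => ℓ z * g z) (g := fun z => ℓ z * (g z - r z))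
      (hℓ2.integrable_mul hg2) (hℓ2.integrable_mul hgr2)]
    congr 1 with z
    ring
  have hcross := hℓ2.sq_integral_mul_le_of_abs_le hℓ_abs hgr2
  have hsq := add_sq_le (a := ∫ z, ℓ z * g z ∂μ) (b := -∫ z, ℓ z * (g z - r z) ∂μ)
  rw [hsplit]
  linarith

theorem stmt0 {Z : Type*} [MeasurableSpace Z] (μ : Measure Z) [IsProbabilityMeasure μ]
    (ℓ r g : Z → ℝ) (m : ℝ)
    (hℓmeas : Measurable ℓ) (hrmeas : Measurable r) (hgmeas : Measurable g)
    (hℓ0 : ∀ z, 0 ≤ ℓ z) (hℓm : ∀ z, ℓ z ≤ m)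
    (hr2 : MemLp r 2 μ) (hg2 : MemLp g 2 μ) :
    (∫ z, ℓ z * r z ∂μ) ^ 2 / 2 ≤
      (∫ z, ℓ z * g z ∂μ) ^ 2 + m ^ 2 * ∫ z, (g z - r z) ^ 2 ∂μ :=
  stmt0_general μ ℓ r g m hℓmeas hℓ0 hℓm hr2 hg2
end

section
/- Let μ be a probability measure, ℓ : Z → [0, m] measurable, and r ∈ L²(μ) the density ratio. For the choice g = r, the upper bound equals the squared importance-weighted risk: J(f, r) = (∫ ℓ·r dμ)², i.e., the second (distance) term vanishes and J(f, r) = R(f)² where R(f) = ∫ ℓ·r dμ. Hence inf over measurable g of J(f, g) satisfies (1/2)R(f)² ≤ inf_g J(f, g) ≤ R(f)². -/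
/-!
Splitting `R(f) = ∫ ℓ g + ∫ ℓ (r - g)` and using `(a + b)² ≤ 2 (a² + b²)` reduces the lower
bound to `(∫ ℓ h)² ≤ m² ∫ h²` for `h = r - g`, which is Jensen's inequality `(∫ X)² ≤ ∫ X²`
(the variance of `X = ℓ h` is nonnegative) followed by `(ℓ h)² ≤ m² h²`.
The upper bound is the choice `g = r`, which kills the distance term.
-/

open MeasureTheory ProbabilityTheory

section

variable {Z : Type*} [MeasurableSpace Z] {μ : Measure Z} {ℓ : Z → ℝ} {m : ℝ}

lemma memLp_mul_of_abs_le (hℓ : AEStronglyMeasurable ℓ μ) (hℓm : ∀ᵐ z ∂μ, |ℓ z| ≤ m)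
    {h : Z → ℝ} (hh : MemLp h 2 μ) : MemLp (fun z => ℓ z * h z) 2 μ :=
  hh.of_le_mul (hℓ.mul hh.1) <| hℓm.mono fun z hz => by
    simpa only [norm_mul, Real.norm_eq_abs] using mul_le_mul_of_nonneg_right hz (abs_nonneg _)

variable [IsProbabilityMeasure μ]

lemma sq_integral_le_integral_sq {X : Z → ℝ} (hX : MemLp X 2 μ) :
    (∫ z, X z ∂μ) ^ 2 ≤ ∫ z, X z ^ 2 ∂μ := by
  have h := variance_eq_sub hX ▸ variance_nonneg X μ
  simpa only [Pi.pow_apply, sub_nonneg] using h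

lemma sq_integral_mul_le (hℓ : AEStronglyMeasurable ℓ μ) (hℓm : ∀ᵐ z ∂μ, |ℓ z| ≤ m)
    {h : Z → ℝ} (hh : MemLp h 2 μ) :
    (∫ z, ℓ z * h z ∂μ) ^ 2 ≤ m ^ 2 * ∫ z, h z ^ 2 ∂μ := calc
  (∫ z, ℓ z * h z ∂μ) ^ 2 ≤ ∫ z, (ℓ z * h z) ^ 2 ∂μ :=
    sq_integral_le_integral_sq (memLp_mul_of_abs_le hℓ hℓm hh)
  _ ≤ ∫ z, m ^ 2 * h z ^ 2 ∂μ := by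
    refine integral_mono_ae (memLp_mul_of_abs_le hℓ hℓm hh).integrable_sq
      (hh.integrable_sq.const_mul _) (hℓm.mono fun z hz => ?_)
    dsimp only
    rw [mul_pow]
    exact mul_le_mul_of_nonneg_right (sq_le_sq.2 (hz.trans (le_abs_self m))) (sq_nonneg _)
  _ = m ^ 2 * ∫ z, h z ^ 2 ∂μ := integral_const_mul _ _

lemma half_sq_integral_mul_le (hℓ : AEStronglyMeasurable ℓ μ) (hℓm : ∀ᵐ z ∂μ, |ℓ z| ≤ m)
    {r g : Z → ℝ} (hr : MemLp r 2 μ) (hg : MemLp g 2 μ) :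
    (1 / 2) * (∫ z, ℓ z * r z ∂μ) ^ 2 ≤
      (∫ z, ℓ z * g z ∂μ) ^ 2 + m ^ 2 * ∫ z, (g z - r z) ^ 2 ∂μ := by
  have hrg : MemLp (fun z => r z - g z) 2 μ := hr.sub hg
  have hsplit : ∫ z, ℓ z * r z ∂μ = ∫ z, ℓ z * g z ∂μ + ∫ z, ℓ z * (r z - g z) ∂μ := by
    rw [← integral_add ((memLp_mul_of_abs_le hℓ hℓm hg).integrable one_le_two) ?_]
    · simp only [mul_sub, add_sub_cancel]
    · exact (memLp_mul_of_abs_le hℓ hℓm hrg).integrable one_le_two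
  have hdist := sq_integral_mul_le hℓ hℓm hrg
  simp only [sub_sq_comm (r _)] at hdist
  rw [hsplit]
  linarith [add_sq_le (a := ∫ z, ℓ z * g z ∂μ) (b := ∫ z, ℓ z * (r z - g z) ∂μ)]

end

theorem stmt10 {Z : Type*} [MeasurableSpace Z] (μ : Measure Z) [IsProbabilityMeasure μ]
    (ℓ r : Z → ℝ) (m : ℝ)
    (hℓmeas : Measurable ℓ) (hrmeas : Measurable r)
    (hℓ0 : ∀ z, 0 ≤ ℓ z) (hℓm : ∀ z, ℓ z ≤ m)
    (hr2 : MemLp r 2 μ) :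
    let J : (Z → ℝ) → ℝ := fun g =>
      (∫ z, ℓ z * g z ∂μ) ^ 2 + m ^ 2 * ∫ z, (g z - r z) ^ 2 ∂μ
    let R : ℝ := ∫ z, ℓ z * r z ∂μ
    J r = R ^ 2 ∧
    (1 / 2) * R ^ 2 ≤ ⨅ g : {g : Z → ℝ // Measurable g ∧ MemLp g 2 μ}, J g.1 ∧
    (⨅ g : {g : Z → ℝ // Measurable g ∧ MemLp g 2 μ}, J g.1) ≤ R ^ 2 := by
  intro J R
  have hJr : J r = R ^ 2 := by simp [J, R]
  have hℓabs : ∀ᵐ z ∂μ, |ℓ z| ≤ m :=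
    .of_forall fun z => (abs_of_nonneg (hℓ0 z)).trans_le (hℓm z)
  have hlow (g : {g : Z → ℝ // Measurable g ∧ MemLp g 2 μ}) : (1 / 2) * R ^ 2 ≤ J g.1 :=
    half_sq_integral_mul_le hℓmeas.aestronglyMeasurable hℓabs hr2 g.2.2
  have : Nonempty {g : Z → ℝ // Measurable g ∧ MemLp g 2 μ} := ⟨⟨r, hrmeas, hr2⟩⟩
  refine ⟨hJr, le_ciInf hlow, ?_⟩
  exact (ciInf_le ⟨_, Set.forall_mem_range.2 hlow⟩ ⟨r, hrmeas, hr2⟩).trans_eq hJr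
end
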